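/- Let Λ = αℤ^d × βℤ^d with α, β > 0 and let K_{m',n',m,n} (with (m',n'), (m,n) ∈ Λ) be a kernel such that B := sup_{n' ∈ βℤ^d} Σ_{n ∈ βℤ^d} sup_{m ∈ αℤ^d} Σ_{m' ∈ αℤ^d} |K_{m',n',m,n}| < ∞. Then the operator (Kc)_{m',n'} = Σ_{(m,n)∈Λ} K_{m',n',m,n} c_{m,n} is continuous on ℓ^∞_n ℓ¹_m; precisely, for every sequence c indexed by Λ, sup_{n'} Σ_{m'} |(Kc)_{m',n'}| ≤ B · sup_{n} Σ_{m} |c_{m,n}|. -/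
import Mathlib


open scoped ENNReal NNReal

noncomputable section

lemma ennnorm_tsum_le' {ι : Type*} (f : ι → ℂ) :
    (‖∑' i, f i‖₊ : ℝ≥0∞) ≤ ∑' i, (‖f i‖₊ : ℝ≥0∞) := by
  by_cases h : Summable f
  · have h' : Summable fun i => ‖f i‖₊ := by
      rw [← NNReal.summable_coe]
      exact (summable_norm_iff.mpr h)
    rw [← ENNReal.coe_tsum h']
    exact_mod_cast nnnorm_tsum_le h'
  · rw [tsum_eq_zero_of_not_summable h]
    simp

/-- Proposition 5.1 (ii): mixed-norm Schur test. If
`B = sup_{n'} Σ_n sup_m Σ_{m'} |K_{m',n',m,n}| < ∞`, then the operator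
`(Kc)_{m',n'} = Σ_{(m,n)} K_{m',n',m,n} c_{m,n}` is continuous on `ℓ^∞_n ℓ¹_m`:
`sup_{n'} Σ_{m'} |(Kc)_{m',n'}| ≤ B · sup_n Σ_m |c_{m,n}|`. The lattice
`Λ = αℤ^d × βℤ^d` is identified with `ℤ^d × ℤ^d`. -/
theorem statement8 {d : ℕ}
    (K : (Fin d → ℤ) → (Fin d → ℤ) → (Fin d → ℤ) → (Fin d → ℤ) → ℂ)
    (B : ℝ≥0∞) (hB : B < ⊤)
    (hKB : (⨆ n' : Fin d → ℤ, ∑' n : Fin d → ℤ, ⨆ m : Fin d → ℤ, ∑' m' : Fin d → ℤ,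
      (‖K m' n' m n‖₊ : ℝ≥0∞)) = B) :
    ∀ c : (Fin d → ℤ) → (Fin d → ℤ) → ℂ,
      (⨆ n' : Fin d → ℤ, ∑' m' : Fin d → ℤ,
          (‖∑' mn : (Fin d → ℤ) × (Fin d → ℤ), K m' n' mn.1 mn.2 * c mn.1 mn.2‖₊ : ℝ≥0∞)) ≤
        B * ⨆ n : Fin d → ℤ, ∑' m : Fin d → ℤ, (‖c m n‖₊ : ℝ≥0∞) := by
  intro c
  set C : ℝ≥0∞ := ⨆ n : Fin d → ℤ, ∑' m : Fin d → ℤ, (‖c m n‖₊ : ℝ≥0∞) with hC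
  apply iSup_le
  intro n'
  calc ∑' m' : Fin d → ℤ,
        (‖∑' mn : (Fin d → ℤ) × (Fin d → ℤ), K m' n' mn.1 mn.2 * c mn.1 mn.2‖₊ : ℝ≥0∞)
      ≤ ∑' m' : Fin d → ℤ, ∑' mn : (Fin d → ℤ) × (Fin d → ℤ),
          (‖K m' n' mn.1 mn.2 * c mn.1 mn.2‖₊ : ℝ≥0∞) :=
        ENNReal.tsum_le_tsum fun m' => ennnorm_tsum_le' _
    _ = ∑' mn : (Fin d → ℤ) × (Fin d → ℤ), ∑' m' : Fin d → ℤ,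
          (‖K m' n' mn.1 mn.2‖₊ : ℝ≥0∞) * (‖c mn.1 mn.2‖₊ : ℝ≥0∞) := by
        rw [ENNReal.tsum_comm]
        congr 1; ext mn; congr 1; ext m'
        rw [nnnorm_mul]; push_cast; ring
    _ = ∑' m : Fin d → ℤ, ∑' n : Fin d → ℤ, ∑' m' : Fin d → ℤ,
          (‖K m' n' m n‖₊ : ℝ≥0∞) * (‖c m n‖₊ : ℝ≥0∞) :=
        ENNReal.tsum_prod (f := fun m n => ∑' m' : Fin d → ℤ,
          (‖K m' n' m n‖₊ : ℝ≥0∞) * (‖c m n‖₊ : ℝ≥0∞))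
    _ = ∑' n : Fin d → ℤ, ∑' m : Fin d → ℤ,
          (∑' m' : Fin d → ℤ, (‖K m' n' m n‖₊ : ℝ≥0∞)) * (‖c m n‖₊ : ℝ≥0∞) := by
        rw [ENNReal.tsum_comm]
        congr 1; ext n; congr 1; ext m
        rw [ENNReal.tsum_mul_right]
    _ ≤ ∑' n : Fin d → ℤ, ∑' m : Fin d → ℤ,
          (⨆ m'' : Fin d → ℤ, ∑' m' : Fin d → ℤ, (‖K m' n' m'' n‖₊ : ℝ≥0∞)) * (‖c m n‖₊ : ℝ≥0∞) :=
        ENNReal.tsum_le_tsum fun n => ENNReal.tsum_le_tsum fun m =>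
          mul_le_mul_left (le_iSup (fun m'' => ∑' m', (‖K m' n' m'' n‖₊ : ℝ≥0∞)) m) _
    _ = ∑' n : Fin d → ℤ,
          (⨆ m'' : Fin d → ℤ, ∑' m' : Fin d → ℤ, (‖K m' n' m'' n‖₊ : ℝ≥0∞)) *
            ∑' m : Fin d → ℤ, (‖c m n‖₊ : ℝ≥0∞) := by
        congr 1; ext n; rw [ENNReal.tsum_mul_left]
    _ ≤ ∑' n : Fin d → ℤ,
          (⨆ m'' : Fin d → ℤ, ∑' m' : Fin d → ℤ, (‖K m' n' m'' n‖₊ : ℝ≥0∞)) * C :=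
        ENNReal.tsum_le_tsum fun n => mul_le_mul_right
          (le_iSup (fun n => ∑' m : Fin d → ℤ, (‖c m n‖₊ : ℝ≥0∞)) n) _
    _ = (∑' n : Fin d → ℤ,
          ⨆ m'' : Fin d → ℤ, ∑' m' : Fin d → ℤ, (‖K m' n' m'' n‖₊ : ℝ≥0∞)) * C :=
        (ENNReal.tsum_mul_right)
    _ ≤ B * C := by
        apply mul_le_mul_left
        rw [← hKB]
        exact le_iSup (fun n' => ∑' n, ⨆ m : Fin d → ℤ, ∑' m' : Fin d → ℤ,
          (‖K m' n' m n‖₊ : ℝ≥0∞)) n'
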